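/- arXiv:1709.04898 — 5 statements merged into one kernel-verified Lean document; each statement's English description precedes it below -/
import Mathlib

section
/- For d ≥ 2, the optimal average success probability of the 2^d → 1 quantum random access code, namely the maximum over choices of two orthonormal bases {ψ_i}, {φ_j} of ℂ^d of (1/(2d²)) ∑_{i,j} (1 + |⟨ψ_i, φ_j⟩|), equals (1/2)(1 + 1/√d); moreover a pair of bases attains this maximum if and only if the bases are mutually unbiased. -/
/-!
By Parseval, for each `i` the overlaps `a j = ‖⟪ψ i, φ j⟫‖` form a unit vector in `ℝ^d`, so
`∑ j, (a j - 1/√d)^2 = 2 - (2/√d) ∑ j, a j` is nonnegative: every row sum is at most `√d`, with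
equality iff every overlap equals `1/√d`. Summing over `i` gives the bound `(1 + 1/√d)/2` together
with its equality case, and the standard basis and the Fourier basis `k ↦ ζ^(i k)/√d` (for a
primitive `d`-th root of unity `ζ`) are mutually unbiased, so the bound is attained.
-/

open scoped InnerProductSpace ComplexInnerProductSpace ComplexConjugate

section RealInequality

variable {ι : Type*} [Fintype ι] [Nonempty ι]

lemma sum_sq_sub_inv_sqrt_card {a : ι → ℝ} (ha : ∑ j, a j ^ 2 = 1) :
    ∑ j, (a j - 1 / √(Fintype.card ι)) ^ 2 = 2 - 2 / √(Fintype.card ι) * ∑ j, a j := by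
  have hn : (0 : ℝ) < Fintype.card ι := by exact_mod_cast Fintype.card_pos
  have hs : √(Fintype.card ι : ℝ) ^ 2 = Fintype.card ι := Real.sq_sqrt hn.le
  simp only [sub_sq, Finset.sum_add_distrib, Finset.sum_sub_distrib, ha, ← Finset.sum_mul,
    ← Finset.mul_sum, Finset.sum_const, Finset.card_univ, nsmul_eq_mul, div_pow, hs]
  field_simp
  ring

lemma sum_le_sqrt_card_of_sum_sq_eq_one {a : ι → ℝ} (ha : ∑ j, a j ^ 2 = 1) :
    ∑ j, a j ≤ √(Fintype.card ι) := by
  have hs : 0 < √(Fintype.card ι : ℝ) := Real.sqrt_pos.2 (by exact_mod_cast Fintype.card_pos)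
  have h := sum_sq_sub_inv_sqrt_card ha
  have : 0 ≤ ∑ j, (a j - 1 / √(Fintype.card ι)) ^ 2 := by positivity
  rw [h, sub_nonneg, div_mul_eq_mul_div, div_le_iff₀ hs] at this
  linarith

lemma sum_eq_sqrt_card_iff_of_sum_sq_eq_one {a : ι → ℝ} (ha : ∑ j, a j ^ 2 = 1) :
    ∑ j, a j = √(Fintype.card ι) ↔ ∀ j, a j = 1 / √(Fintype.card ι) := by
  have hs : 0 < √(Fintype.card ι : ℝ) := Real.sqrt_pos.2 (by exact_mod_cast Fintype.card_pos)
  have h := sum_sq_sub_inv_sqrt_card ha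
  calc ∑ j, a j = √(Fintype.card ι) ↔ ∑ j, (a j - 1 / √(Fintype.card ι)) ^ 2 = 0 := by
        rw [h, sub_eq_zero, div_mul_eq_mul_div, eq_div_iff hs.ne']
        constructor <;> intro <;> linarith
    _ ↔ ∀ j, a j = 1 / √(Fintype.card ι) := by
        simp only [Finset.sum_eq_zero_iff_of_nonneg fun j _ => sq_nonneg _, Finset.mem_univ,
          true_implies, sq_eq_zero_iff, sub_eq_zero]

end RealInequality

namespace OrthonormalBasis

variable {ι 𝕜 E : Type*} [Fintype ι] [RCLike 𝕜] [NormedAddCommGroup E] [InnerProductSpace 𝕜 E]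
  (ψ φ : OrthonormalBasis ι 𝕜 E)

lemma sum_sq_norm_inner_eq_one (i : ι) : ∑ j, ‖⟪ψ i, φ j⟫_𝕜‖ ^ 2 = 1 := by
  rw [φ.sum_sq_norm_inner_left, ψ.orthonormal.1 i, one_pow]

lemma sum_norm_inner_le (i : ι) : ∑ j, ‖⟪ψ i, φ j⟫_𝕜‖ ≤ √(Fintype.card ι) :=
  have : Nonempty ι := ⟨i⟩
  sum_le_sqrt_card_of_sum_sq_eq_one (ψ.sum_sq_norm_inner_eq_one φ i)

lemma sum_norm_inner_eq_iff (i : ι) :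
    ∑ j, ‖⟪ψ i, φ j⟫_𝕜‖ = √(Fintype.card ι) ↔ ∀ j, ‖⟪ψ i, φ j⟫_𝕜‖ = 1 / √(Fintype.card ι) :=
  have : Nonempty ι := ⟨i⟩
  sum_eq_sqrt_card_iff_of_sum_sq_eq_one (ψ.sum_sq_norm_inner_eq_one φ i)

lemma sum_sum_norm_inner_le :
    ∑ i, ∑ j, ‖⟪ψ i, φ j⟫_𝕜‖ ≤ Fintype.card ι * √(Fintype.card ι) := by
  simpa using Finset.sum_le_sum fun i (_ : i ∈ Finset.univ) => ψ.sum_norm_inner_le φ i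

lemma sum_sum_norm_inner_eq_iff :
    ∑ i, ∑ j, ‖⟪ψ i, φ j⟫_𝕜‖ = Fintype.card ι * √(Fintype.card ι) ↔
      ∀ i j, ‖⟪ψ i, φ j⟫_𝕜‖ = 1 / √(Fintype.card ι) := by
  have hconst : (Fintype.card ι : ℝ) * √(Fintype.card ι) = ∑ _i : ι, √(Fintype.card ι) := by simp
  rw [hconst, Finset.sum_eq_sum_iff_of_le fun i _ => ψ.sum_norm_inner_le φ i]
  simp only [Finset.mem_univ, true_implies, ψ.sum_norm_inner_eq_iff φ]

end OrthonormalBasis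

section QRAC

variable {ι 𝕜 E : Type*} [Fintype ι] [RCLike 𝕜] [NormedAddCommGroup E] [InnerProductSpace 𝕜 E]

-- `1 + ‖⟪ψ i, φ j⟫‖` is the largest eigenvalue of `|ψ i⟩⟨ψ i| + |φ j⟩⟨φ j|`, i.e. twice the
-- success probability of the best pure state for the pair of measurement outcomes `(i, j)`.
noncomputable def qracAvgSuccessProb (ψ φ : OrthonormalBasis ι 𝕜 E) : ℝ :=
  1 / (2 * Fintype.card ι ^ 2) * ∑ i, ∑ j, (1 + ‖⟪ψ i, φ j⟫_𝕜‖)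

def MutuallyUnbiased (ψ φ : OrthonormalBasis ι 𝕜 E) : Prop :=
  ∀ i j, ‖⟪ψ i, φ j⟫_𝕜‖ ^ 2 = 1 / Fintype.card ι

variable (ψ φ : OrthonormalBasis ι 𝕜 E)

lemma mutuallyUnbiased_iff_norm_inner_eq :
    MutuallyUnbiased ψ φ ↔ ∀ i j, ‖⟪ψ i, φ j⟫_𝕜‖ = 1 / √(Fintype.card ι) := by
  refine forall₂_congr fun i j => ?_
  rw [one_div, one_div, ← Real.sqrt_inv, eq_comm (b := √_),
    Real.sqrt_eq_iff_eq_sq (by positivity) (norm_nonneg _), eq_comm]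

variable [Nonempty ι]

lemma qracAvgSuccessProb_sub_eq :
    qracAvgSuccessProb ψ φ - 1 / 2 * (1 + 1 / √(Fintype.card ι)) =
      (∑ i, ∑ j, ‖⟪ψ i, φ j⟫_𝕜‖ - Fintype.card ι * √(Fintype.card ι)) /
        (2 * Fintype.card ι ^ 2) := by
  have hn : (0 : ℝ) < Fintype.card ι := by exact_mod_cast Fintype.card_pos
  have hs2 : √(Fintype.card ι : ℝ) ^ 2 = Fintype.card ι := Real.sq_sqrt hn.le
  simp only [qracAvgSuccessProb, Finset.sum_add_distrib, Finset.sum_const, Finset.card_univ,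
    nsmul_eq_mul, mul_one]
  field_simp
  linear_combination (Fintype.card ι : ℝ) * hs2

lemma qracAvgSuccessProb_le : qracAvgSuccessProb ψ φ ≤ 1 / 2 * (1 + 1 / √(Fintype.card ι)) := by
  rw [← sub_nonpos, qracAvgSuccessProb_sub_eq]
  exact div_nonpos_of_nonpos_of_nonneg (sub_nonpos.2 (ψ.sum_sum_norm_inner_le φ)) (by positivity)

lemma qracAvgSuccessProb_eq_iff :
    qracAvgSuccessProb ψ φ = 1 / 2 * (1 + 1 / √(Fintype.card ι)) ↔ MutuallyUnbiased ψ φ := by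
  rw [← sub_eq_zero, qracAvgSuccessProb_sub_eq, div_eq_zero_iff, or_iff_left (by positivity),
    sub_eq_zero, ψ.sum_sum_norm_inner_eq_iff φ, mutuallyUnbiased_iff_norm_inner_eq]

end QRAC

section Fourier

variable {d : ℕ}

noncomputable def fourierVec (ζ : ℂ) (i : Fin d) : EuclideanSpace ℂ (Fin d) :=
  WithLp.toLp 2 fun k => ζ ^ ((i : ℕ) * k) / √d

variable {ζ : ℂ}

lemma norm_fourierVec_apply (hζ : IsPrimitiveRoot ζ d) (i k : Fin d) :
    ‖fourierVec ζ i k‖ = 1 / √d := by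
  simp [fourierVec, hζ.norm'_eq_one (Fin.pos i).ne']

lemma inner_fourierVec (hζ : IsPrimitiveRoot ζ d) (i j : Fin d) :
    ⟪fourierVec ζ i, fourierVec ζ j⟫ = if i = j then 1 else 0 := by
  have hd : d ≠ 0 := (Fin.pos i).ne'
  have hconj : conj ζ = ζ⁻¹ := (RCLike.inv_eq_conj (hζ.norm'_eq_one hd)).symm
  have hsqrt : (√d : ℂ) * √d = d := by exact_mod_cast Real.mul_self_sqrt (Nat.cast_nonneg d)
  set w := (ζ ^ (i : ℕ))⁻¹ * ζ ^ (j : ℕ) with hw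
  have hterm (k : Fin d) : fourierVec ζ j k * conj (fourierVec ζ i k) = w ^ (k : ℕ) / d := by
    simp only [fourierVec, PiLp.toLp_apply, map_div₀, map_pow, hconj, Complex.conj_ofReal]
    rw [div_mul_div_comm, hsqrt, hw]
    ring
  rw [PiLp.inner_apply]
  simp only [RCLike.inner_apply, hterm]
  rw [← Finset.sum_div, Fin.sum_univ_eq_sum_range (fun k => w ^ k) d]
  split_ifs with hij
  · have hw1 : w = 1 := by rw [hw, hij, inv_mul_cancel₀ (pow_ne_zero _ (hζ.ne_zero hd))]
    simp [hw1, hd]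
  · have hw1 : w ≠ 1 := fun h => hij <| Fin.ext <|
      hζ.pow_inj i.isLt j.isLt ((inv_mul_eq_one₀ (pow_ne_zero _ (hζ.ne_zero hd))).1 h)
    have hwd : w ^ d = 1 := by
      rw [hw, mul_pow, inv_pow, ← pow_mul, ← pow_mul, mul_comm (i : ℕ), mul_comm (j : ℕ), pow_mul,
        pow_mul, hζ.pow_eq_one]
      simp
    rw [geom_sum_eq hw1, hwd]
    simp

lemma orthonormal_fourierVec (hζ : IsPrimitiveRoot ζ d) : Orthonormal ℂ (fourierVec (d := d) ζ) :=
  orthonormal_iff_ite.2 (inner_fourierVec hζ)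

noncomputable def IsPrimitiveRoot.fourierBasis (hζ : IsPrimitiveRoot ζ d) :
    OrthonormalBasis (Fin d) ℂ (EuclideanSpace ℂ (Fin d)) :=
  OrthonormalBasis.mk (orthonormal_fourierVec hζ)
    ((orthonormal_fourierVec hζ).linearIndependent.span_eq_top_of_card_eq_finrank'
      (by simp)).ge

lemma IsPrimitiveRoot.coe_fourierBasis (hζ : IsPrimitiveRoot ζ d) :
    ⇑hζ.fourierBasis = fourierVec ζ :=
  OrthonormalBasis.coe_mk _ _

end Fourier

lemma exists_mutuallyUnbiased {d : ℕ} (hd : d ≠ 0) :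
    ∃ ψ φ : OrthonormalBasis (Fin d) ℂ (EuclideanSpace ℂ (Fin d)), MutuallyUnbiased ψ φ := by
  have hζ := Complex.isPrimitiveRoot_exp d hd
  refine ⟨EuclideanSpace.basisFun (Fin d) ℂ, hζ.fourierBasis,
    (mutuallyUnbiased_iff_norm_inner_eq _ _).2 fun i j => ?_⟩
  rw [hζ.coe_fourierBasis, EuclideanSpace.basisFun_apply, EuclideanSpace.inner_single_left,
    map_one, one_mul, norm_fourierVec_apply hζ, Fintype.card_fin]

open scoped ComplexInnerProductSpace in
theorem qrac_2d_optimal (d : ℕ) (hd : 2 ≤ d) :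
    IsGreatest
      {p : ℝ | ∃ ψ φ : OrthonormalBasis (Fin d) ℂ (EuclideanSpace ℂ (Fin d)),
        p = (1 / (2 * d ^ 2)) * ∑ i : Fin d, ∑ j : Fin d, (1 + ‖⟪ψ i, φ j⟫‖)}
      ((1 / 2) * (1 + 1 / Real.sqrt d)) ∧
    ∀ ψ φ : OrthonormalBasis (Fin d) ℂ (EuclideanSpace ℂ (Fin d)),
      (1 / (2 * d ^ 2)) * (∑ i : Fin d, ∑ j : Fin d, (1 + ‖⟪ψ i, φ j⟫‖)) =
        (1 / 2) * (1 + 1 / Real.sqrt d) ↔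
      ∀ i j : Fin d, ‖⟪ψ i, φ j⟫‖ ^ 2 = 1 / d := by
  have : Nonempty (Fin d) := ⟨⟨0, by omega⟩⟩
  have hle (ψ φ : OrthonormalBasis (Fin d) ℂ (EuclideanSpace ℂ (Fin d))) :=
    qracAvgSuccessProb_le ψ φ
  have heq (ψ φ : OrthonormalBasis (Fin d) ℂ (EuclideanSpace ℂ (Fin d))) :=
    qracAvgSuccessProb_eq_iff ψ φ
  obtain ⟨ψ, φ, hψφ⟩ := exists_mutuallyUnbiased (d := d) (by omega)
  simp only [qracAvgSuccessProb, MutuallyUnbiased, Fintype.card_fin] at hle heq hψφ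
  refine ⟨⟨⟨ψ, φ, ((heq ψ φ).2 hψφ).symm⟩, ?_⟩, heq⟩
  rintro p ⟨ψ, φ, rfl⟩
  exact hle ψ φ
end

section
/- Let {ψ_i}, {φ_j} be orthonormal bases of ℂ^d and define D² = 1 − (1/(d−1)) ∑_{i,j} (|⟨ψ_i, φ_j⟩|² − 1/d)². Then 0 ≤ D² ≤ 1, D² = 1 if and only if the bases are mutually unbiased, and D² is symmetric in the two bases. -/
/-!
By Parseval the squared overlaps `‖⟪ψ i, φ j⟫‖ ^ 2` form a doubly stochastic matrix, so they are
`d ^ 2` numbers in `[0, 1]` with sum `d`, hence mean `1 / d`. Since `x ^ 2 ≤ x` on `[0, 1]`, the sum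
of their squared deviations from the mean is at most `d - d ^ 2 / d ^ 2 = d - 1`, and it vanishes
exactly when every overlap equals `1 / d`.
-/

open Finset
open scoped InnerProductSpace

theorem sum_sq_sub_mean_le_of_mem_Icc {ι : Type*} [Fintype ι] (x : ι → ℝ)
    (hx : ∀ k, x k ∈ Set.Icc (0 : ℝ) 1) :
    ∑ k, (x k - (∑ l, x l) / Fintype.card ι) ^ 2
      ≤ ∑ k, x k - (∑ k, x k) ^ 2 / Fintype.card ι := by
  set s := ∑ l, x l
  have hsq : ∑ k, x k ^ 2 ≤ s := sum_le_sum fun k _ => by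
    obtain ⟨h0, h1⟩ := hx k
    nlinarith
  have hvar : ∑ k, (x k - s / Fintype.card ι) ^ 2 = ∑ k, x k ^ 2 - s ^ 2 / Fintype.card ι := by
    rcases isEmpty_or_nonempty ι with hι | hι
    · simp [s]
    simp only [sub_sq, sum_add_distrib, sum_sub_distrib, ← sum_mul, ← mul_sum, sum_const,
      card_univ, nsmul_eq_mul]
    field_simp
    ring
  linarith

theorem sum_sum_sq_sub_eq_zero_iff {ι κ : Type*} [Fintype ι] [Fintype κ] (f : ι → κ → ℝ)
    (c : ℝ) : ∑ i, ∑ j, (f i j - c) ^ 2 = 0 ↔ ∀ i j, f i j = c := by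
  simp [Fintype.sum_eq_zero_iff_of_nonneg, Pi.le_def, sum_nonneg, sq_nonneg, funext_iff,
    sub_eq_zero]

theorem sum_sum_sq_norm_inner_comm {𝕜 E ι : Type*} [RCLike 𝕜] [NormedAddCommGroup E]
    [InnerProductSpace 𝕜 E] [Fintype ι] (v w : ι → E) (c : ℝ) :
    ∑ i, ∑ j, (‖⟪w i, v j⟫_𝕜‖ ^ 2 - c) ^ 2 = ∑ i, ∑ j, (‖⟪v i, w j⟫_𝕜‖ ^ 2 - c) ^ 2 := by
  rw [sum_comm]
  simp only [norm_inner_symm]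

namespace OrthonormalBasis

variable {𝕜 E ι : Type*} [RCLike 𝕜] [NormedAddCommGroup E] [InnerProductSpace 𝕜 E] [Fintype ι]

theorem sq_norm_inner_mem_Icc {κ : Type*} [Fintype κ] (ψ : OrthonormalBasis ι 𝕜 E)
    (φ : OrthonormalBasis κ 𝕜 E) (i : ι) (j : κ) : ‖⟪ψ i, φ j⟫_𝕜‖ ^ 2 ∈ Set.Icc (0 : ℝ) 1 := by
  have h := norm_inner_le_norm (𝕜 := 𝕜) (ψ i) (φ j)
  rw [ψ.orthonormal.1 i, φ.orthonormal.1 j, mul_one] at h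
  exact ⟨sq_nonneg _, pow_le_one₀ (norm_nonneg _) h⟩

theorem sum_sum_sq_norm_inner {κ : Type*} [Fintype κ] (ψ : OrthonormalBasis ι 𝕜 E)
    (φ : OrthonormalBasis κ 𝕜 E) : ∑ i, ∑ j, ‖⟪ψ i, φ j⟫_𝕜‖ ^ 2 = (Fintype.card ι : ℝ) := by
  simp [φ.sum_sq_norm_inner_left, ψ.orthonormal.1]

theorem sum_sum_sq_norm_inner_sub_inv_card_le [Nonempty ι] (ψ φ : OrthonormalBasis ι 𝕜 E) :
    ∑ i, ∑ j, (‖⟪ψ i, φ j⟫_𝕜‖ ^ 2 - 1 / (Fintype.card ι : ℝ)) ^ 2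
      ≤ (Fintype.card ι : ℝ) - 1 := by
  have key := sum_sq_sub_mean_le_of_mem_Icc (fun p : ι × ι => ‖⟪ψ p.1, φ p.2⟫_𝕜‖ ^ 2)
    fun p => ψ.sq_norm_inner_mem_Icc φ p.1 p.2
  have hn : (Fintype.card ι : ℝ) ≠ 0 := by positivity
  simp only [Fintype.sum_prod_type, ψ.sum_sum_sq_norm_inner φ, Fintype.card_prod,
    Nat.cast_mul] at key
  rwa [div_mul_cancel_left₀ hn, ← sq, div_self (pow_ne_zero 2 hn), ← one_div] at key

end OrthonormalBasis

open scoped ComplexInnerProductSpace in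
theorem distance_measure_properties (d : ℕ) (hd : 2 ≤ d)
    (D2 : OrthonormalBasis (Fin d) ℂ (EuclideanSpace ℂ (Fin d)) →
          OrthonormalBasis (Fin d) ℂ (EuclideanSpace ℂ (Fin d)) → ℝ)
    (hD2 : ∀ ψ φ, D2 ψ φ =
      1 - (1 / (d - 1 : ℝ)) * ∑ i : Fin d, ∑ j : Fin d, (‖⟪ψ i, φ j⟫‖ ^ 2 - 1 / d) ^ 2) :
    ∀ ψ φ : OrthonormalBasis (Fin d) ℂ (EuclideanSpace ℂ (Fin d)),
      (0 ≤ D2 ψ φ) ∧ (D2 ψ φ ≤ 1) ∧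
      (D2 ψ φ = 1 ↔ ∀ i j : Fin d, ‖⟪ψ i, φ j⟫‖ ^ 2 = 1 / d) ∧
      D2 ψ φ = D2 φ ψ := by
  intro ψ φ
  have hd1 : (0 : ℝ) < d - 1 := by
    have : (2 : ℝ) ≤ d := by exact_mod_cast hd
    linarith
  have : NeZero d := ⟨by omega⟩
  have hvar := ψ.sum_sum_sq_norm_inner_sub_inv_card_le φ
  rw [Fintype.card_fin] at hvar
  have hsymm : D2 ψ φ = D2 φ ψ := by rw [hD2, hD2, sum_sum_sq_norm_inner_comm]
  refine ⟨?_, ?_, ?_, hsymm⟩ <;> rw [hD2]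
  · rwa [sub_nonneg, one_div_mul_eq_div, div_le_one hd1]
  · exact sub_le_self _ (by positivity)
  · rw [sub_eq_self, mul_eq_zero, or_iff_right (one_div_ne_zero hd1.ne'),
      sum_sum_sq_sub_eq_zero_iff]
end

section
/- Let {ψ_i}, {φ_j} be orthonormal bases of ℂ^d. The distance measure D² = 1 − (1/(d−1)) ∑_{i,j} (|⟨ψ_i, φ_j⟩|² − 1/d)² equals 0 if and only if the two bases coincide up to a permutation and phases, i.e. there is a permutation σ of {1,...,d} with |⟨ψ_i, φ_{σ(i)}⟩| = 1 for all i. -/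
/-!
The overlap matrix `P i j = ‖⟪ψ i, φ j⟫‖²` of two orthonormal bases is doubly stochastic. For such
a matrix `∑ (P i j - 1/d)² = ∑ P i j² - 1`, so `D² = (d - ∑ P i j²) / (d - 1)`. Since
`P i j² ≤ P i j` and the entries sum to `d`, `D² = 0` forces every entry to be `0` or `1`, and a
doubly stochastic `0`-`1` matrix is a permutation matrix.
-/

open Finset

section OrderedSemiring

variable {R n : Type*} [Fintype n] [DecidableEq n] [Semiring R] [PartialOrder R] [IsOrderedRing R]
  {M : Matrix n n R}

lemma sum_sum_of_mem_doublyStochastic (hM : M ∈ doublyStochastic R n) :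
    ∑ i, ∑ j, M i j = Fintype.card n := by
  simp [sum_row_of_mem_doublyStochastic hM]

lemma add_le_one_of_mem_doublyStochastic_row (hM : M ∈ doublyStochastic R n) (i : n) {j k : n}
    (hjk : j ≠ k) : M i j + M i k ≤ 1 := by
  rw [← sum_pair hjk, ← sum_row_of_mem_doublyStochastic hM i]
  exact sum_le_sum_of_subset_of_nonneg (subset_univ _) fun _ _ _ ↦ hM.1 _ _

lemma add_le_one_of_mem_doublyStochastic_col (hM : M ∈ doublyStochastic R n) (k : n) {i j : n}
    (hij : i ≠ j) : M i k + M j k ≤ 1 := by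
  rw [← sum_pair (f := (M · k)) hij, ← sum_col_of_mem_doublyStochastic hM k]
  exact sum_le_sum_of_subset_of_nonneg (subset_univ _) fun _ _ _ ↦ hM.1 _ _

end OrderedSemiring

section LinearOrderedRing

variable {R n : Type*} [Fintype n] [DecidableEq n] [Ring R] [LinearOrder R] [IsStrictOrderedRing R]
  {M : Matrix n n R}

lemma sum_sum_sq_eq_card_iff_of_mem_doublyStochastic (hM : M ∈ doublyStochastic R n) :
    ∑ i, ∑ j, M i j ^ 2 = Fintype.card n ↔ ∀ i j, M i j = 0 ∨ M i j = 1 := by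
  have hsq (i j : n) : M i j ^ 2 ≤ M i j :=
    sq_le (nonneg_of_mem_doublyStochastic hM) (le_one_of_mem_doublyStochastic hM)
  rw [← sum_sum_of_mem_doublyStochastic hM,
    sum_eq_sum_iff_of_le fun i _ ↦ sum_le_sum fun j _ ↦ hsq i j]
  refine forall_congr' fun i ↦ ?_
  rw [sum_eq_sum_iff_of_le fun j _ ↦ hsq i j]
  simp only [mem_univ, forall_const, sq]
  exact forall_congr' fun _ ↦ IsIdempotentElem.iff_eq_zero_or_one

lemma exists_perm_apply_eq_one_iff_of_mem_doublyStochastic (hM : M ∈ doublyStochastic R n) :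
    (∃ σ : Equiv.Perm n, ∀ i, M i (σ i) = 1) ↔ ∀ i j, M i j = 0 ∨ M i j = 1 := by
  constructor
  · rintro ⟨σ, hσ⟩ i j
    by_cases hj : j = σ i
    · exact .inr (hj ▸ hσ i)
    · have := add_le_one_of_mem_doublyStochastic_row hM i hj
      rw [hσ i, add_le_iff_nonpos_left] at this
      exact .inl (le_antisymm this (hM.1 i j))
  · intro h01
    have hrow (i : n) : ∃ j, M i j = 1 := by
      by_contra! hne
      have : ∑ j, M i j = 0 := sum_eq_zero fun j _ ↦ (h01 i j).resolve_right (hne j)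
      simp [sum_row_of_mem_doublyStochastic hM] at this
    choose f hf using hrow
    have hf_inj : f.Injective := by
      intro i₁ i₂ heq
      by_contra hne
      have := add_le_one_of_mem_doublyStochastic_col hM (f i₁) hne
      rw [hf i₁, heq, hf i₂] at this
      norm_num at this
    exact ⟨.ofBijective f hf_inj.bijective_of_finite, hf⟩

end LinearOrderedRing

lemma sum_sum_sub_one_div_card_sq_of_mem_doublyStochastic {R n : Type*} [Fintype n]
    [DecidableEq n] [Nonempty n] [Field R] [LinearOrder R] [IsStrictOrderedRing R]
    {M : Matrix n n R} (hM : M ∈ doublyStochastic R n) :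
    ∑ i, ∑ j, (M i j - 1 / Fintype.card n) ^ 2 = ∑ i, ∑ j, M i j ^ 2 - 1 := by
  have hn : (Fintype.card n : R) ≠ 0 := by positivity
  simp only [sub_sq, sum_add_distrib, sum_sub_distrib, ← mul_sum, ← sum_mul,
    sum_row_of_mem_doublyStochastic hM, sum_const, card_univ, nsmul_eq_mul]
  field_simp
  ring

lemma OrthonormalBasis.norm_inner_sq_mem_doublyStochastic {𝕜 E ι : Type*} [RCLike 𝕜]
    [NormedAddCommGroup E] [InnerProductSpace 𝕜 E] [Fintype ι] [DecidableEq ι]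
    (b c : OrthonormalBasis ι 𝕜 E) :
    Matrix.of (fun i j ↦ ‖inner 𝕜 (b i) (c j)‖ ^ 2) ∈ doublyStochastic ℝ ι := by
  refine mem_doublyStochastic_iff_sum.2 ⟨fun _ _ ↦ sq_nonneg _, fun i ↦ ?_, fun j ↦ ?_⟩
  · simp [c.sum_sq_norm_inner_left]
  · simp [b.sum_sq_norm_inner_right]

open scoped ComplexInnerProductSpace in
theorem distance_measure_zero_iff (d : ℕ) (hd : 2 ≤ d)
    (ψ φ : OrthonormalBasis (Fin d) ℂ (EuclideanSpace ℂ (Fin d))) :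
    1 - (1 / (d - 1 : ℝ)) * (∑ i : Fin d, ∑ j : Fin d, (‖⟪ψ i, φ j⟫‖ ^ 2 - 1 / d) ^ 2) = 0 ↔
    ∃ σ : Equiv.Perm (Fin d), ∀ i : Fin d, ‖⟪ψ i, φ (σ i)⟫‖ = 1 := by
  have : NeZero d := ⟨by omega⟩
  have hd1 : (d : ℝ) - 1 ≠ 0 := by
    have : (2 : ℝ) ≤ d := by exact_mod_cast hd
    linarith
  let P : Matrix (Fin d) (Fin d) ℝ := .of fun i j ↦ ‖⟪ψ i, φ j⟫‖ ^ 2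
  have hP : P ∈ doublyStochastic ℝ (Fin d) := ψ.norm_inner_sq_mem_doublyStochastic φ
  have hdist := sum_sum_sub_one_div_card_sq_of_mem_doublyStochastic hP
  have hcard := sum_sum_sq_eq_card_iff_of_mem_doublyStochastic hP
  rw [Fintype.card_fin] at hdist hcard
  calc _ ↔ ∑ i, ∑ j, P i j ^ 2 = d := by
        change 1 - 1 / (d - 1 : ℝ) * ∑ i, ∑ j, (P i j - 1 / d) ^ 2 = 0 ↔ _
        rw [hdist]
        field_simp
        constructor <;> intro h <;> linarith
    _ ↔ ∃ σ : Equiv.Perm (Fin d), ∀ i, P i (σ i) = 1 := by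
        rw [hcard, exists_perm_apply_eq_one_iff_of_mem_doublyStochastic hP]
    _ ↔ _ := by
        simp only [P, Matrix.of_apply, pow_eq_one_iff_of_nonneg (norm_nonneg _) two_ne_zero]
end

section
/- The optimal average success probability of the (n,2)^d → 1 promise-QRAC satisfies P̃_q(n,2,d) ≤ (1/2)(1 + 1/√d), and equality holds if and only if there exist n orthonormal bases of ℂ^d that are pairwise mutually unbiased. -/
/-!
For two orthonormal bases `ψ, φ` of a `d`-dimensional space the `d²` overlaps `xᵢⱼ = |⟨ψᵢ, φⱼ⟩|`
have squares summing to `d` (Parseval), hence `∑ (xᵢⱼ - 1/√d)² = 2d - (2/√d) ∑ xᵢⱼ ≥ 0`: the total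
overlap is at most `d√d`, with equality iff every overlap is `1/√d`. The success probability of the
pQRAC is the average of these pair values over the pairs of bases, so it attains the bound iff every
pair of bases is mutually unbiased.
-/

open Finset
open scoped BigOperators InnerProductSpace

section SquaredDeviation

variable {κ : Type*} [Fintype κ] {x : κ → ℝ} {c : ℝ}

theorem sum_sq_sub_eq_of_sum_sq_eq (h : ∑ k, x k ^ 2 = Fintype.card κ * c ^ 2) :
    ∑ k, (x k - c) ^ 2 = 2 * c * (Fintype.card κ * c - ∑ k, x k) := by
  simp only [sub_sq, sum_add_distrib, sum_sub_distrib, h, ← sum_mul, ← mul_sum, sum_const,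
    card_univ, nsmul_eq_mul]
  ring

theorem sum_le_card_mul_of_sum_sq_eq (hc : 0 < c) (h : ∑ k, x k ^ 2 = Fintype.card κ * c ^ 2) :
    ∑ k, x k ≤ Fintype.card κ * c := by
  have hdev : 0 ≤ 2 * c * (Fintype.card κ * c - ∑ k, x k) := by
    rw [← sum_sq_sub_eq_of_sum_sq_eq h]
    positivity
  exact sub_nonneg.mp ((mul_nonneg_iff_of_pos_left (by positivity)).mp hdev)

theorem sum_eq_card_mul_iff_of_sum_sq_eq (hc : c ≠ 0)
    (h : ∑ k, x k ^ 2 = Fintype.card κ * c ^ 2) :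
    ∑ k, x k = Fintype.card κ * c ↔ ∀ k, x k = c := by
  rw [eq_comm, ← sub_eq_zero, ← mul_eq_zero_iff_left (mul_ne_zero two_ne_zero hc),
    ← sum_sq_sub_eq_of_sum_sq_eq h, Fintype.sum_eq_zero_iff_of_nonneg fun k => sq_nonneg _,
    funext_iff]
  simp only [Pi.zero_apply, sq_eq_zero_iff, sub_eq_zero]

end SquaredDeviation

theorem one_half_mul_one_add_one_div_sqrt_eq {N : ℝ} (hN : 0 < N) :
    1 / 2 * (1 + 1 / √N) = 1 / (2 * N ^ 2) * (N ^ 2 + N * √N) := by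
  have hs : 0 < √N := Real.sqrt_pos.mpr hN
  have hss : √N ^ 2 = N := Real.sq_sqrt hN.le
  field_simp
  nlinarith

theorem Finset.expect_eq_iff_of_le {α : Type*} {s : Finset α} {f : α → ℝ} {a : ℝ}
    (hs : s.Nonempty) (h : ∀ p ∈ s, f p ≤ a) : 𝔼 p ∈ s, f p = a ↔ ∀ p ∈ s, f p = a := by
  refine ⟨fun heq p hp => ?_, fun h' => by rw [expect_congr rfl h', expect_const hs]⟩
  by_contra hne
  exact (expect_lt h ⟨p, hp, (h p hp).lt_of_ne hne⟩).ne heq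

section MutuallyUnbiased

variable {𝕜 E ι : Type*} [RCLike 𝕜] [NormedAddCommGroup E] [InnerProductSpace 𝕜 E] [Fintype ι]

def IsMutuallyUnbiased (b c : OrthonormalBasis ι 𝕜 E) : Prop :=
  ∀ i j, ‖⟪b i, c j⟫_𝕜‖ ^ 2 = 1 / Fintype.card ι

theorem IsMutuallyUnbiased.symm {b c : OrthonormalBasis ι 𝕜 E} (h : IsMutuallyUnbiased b c) :
    IsMutuallyUnbiased c b := fun i j => by
  rw [norm_inner_symm]
  exact h j i

theorem OrthonormalBasis.sum_sum_sq_norm_inner_s10 (b c : OrthonormalBasis ι 𝕜 E) :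
    ∑ i, ∑ j, ‖⟪b i, c j⟫_𝕜‖ ^ 2 = (Fintype.card ι : ℝ) := by
  simp [c.sum_sq_norm_inner_left, b.orthonormal.1]

theorem OrthonormalBasis.sum_sum_norm_inner_le_and_eq_iff [Nonempty ι]
    (b c : OrthonormalBasis ι 𝕜 E) :
    ∑ i, ∑ j, ‖⟪b i, c j⟫_𝕜‖ ≤ Fintype.card ι * √(Fintype.card ι) ∧
      (∑ i, ∑ j, ‖⟪b i, c j⟫_𝕜‖ = Fintype.card ι * √(Fintype.card ι) ↔
        IsMutuallyUnbiased b c) := by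
  set N : ℝ := (Fintype.card ι : ℝ)
  have hN : 0 < N := by positivity
  have hss : √N ^ 2 = N := Real.sq_sqrt hN.le
  have hcard : (Fintype.card (ι × ι) : ℝ) = N * N := by simp [N]
  have hsq : ∑ p : ι × ι, ‖⟪b p.1, c p.2⟫_𝕜‖ ^ 2 = Fintype.card (ι × ι) * (1 / √N) ^ 2 := by
    have hsum : ∑ i, ∑ j, ‖⟪b i, c j⟫_𝕜‖ ^ 2 = N := b.sum_sum_sq_norm_inner_s10 c
    rw [Fintype.sum_prod_type' (fun i j => ‖⟪b i, c j⟫_𝕜‖ ^ 2), hsum, hcard, div_pow, hss]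
    field_simp
  have htot : (Fintype.card (ι × ι) : ℝ) * (1 / √N) = N * √N := by
    rw [hcard]
    field_simp
    rw [hss]
  rw [← htot, ← Fintype.sum_prod_type' (fun i j => ‖⟪b i, c j⟫_𝕜‖)]
  refine ⟨sum_le_card_mul_of_sum_sq_eq (by positivity) hsq, ?_⟩
  rw [sum_eq_card_mul_iff_of_sum_sq_eq (by positivity) hsq, Prod.forall]
  refine forall₂_congr fun i j => ?_
  change ‖⟪b i, c j⟫_𝕜‖ = 1 / √N ↔ ‖⟪b i, c j⟫_𝕜‖ ^ 2 = 1 / N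
  rw [one_div, ← Real.sqrt_inv, eq_comm, Real.sqrt_eq_iff_eq_sq (by positivity) (norm_nonneg _),
    eq_comm, one_div]

noncomputable def pairSuccessProb (b c : OrthonormalBasis ι 𝕜 E) : ℝ :=
  1 / (2 * Fintype.card ι ^ 2) * ∑ i, ∑ j, (1 + ‖⟪b i, c j⟫_𝕜‖)

theorem pairSuccessProb_eq (b c : OrthonormalBasis ι 𝕜 E) :
    pairSuccessProb b c =
      1 / (2 * Fintype.card ι ^ 2) * (Fintype.card ι ^ 2 + ∑ i, ∑ j, ‖⟪b i, c j⟫_𝕜‖) := by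
  simp only [pairSuccessProb, sum_add_distrib, sum_const, card_univ, nsmul_eq_mul, mul_one]
  ring

theorem pairSuccessProb_le [Nonempty ι] (b c : OrthonormalBasis ι 𝕜 E) :
    pairSuccessProb b c ≤ 1 / 2 * (1 + 1 / √(Fintype.card ι)) := by
  rw [pairSuccessProb_eq, one_half_mul_one_add_one_div_sqrt_eq (by positivity)]
  gcongr
  exact (b.sum_sum_norm_inner_le_and_eq_iff c).1

theorem pairSuccessProb_eq_iff [Nonempty ι] (b c : OrthonormalBasis ι 𝕜 E) :
    pairSuccessProb b c = 1 / 2 * (1 + 1 / √(Fintype.card ι)) ↔ IsMutuallyUnbiased b c := by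
  rw [pairSuccessProb_eq, one_half_mul_one_add_one_div_sqrt_eq (by positivity),
    mul_right_inj' (by positivity), add_right_inj]
  exact (b.sum_sum_norm_inner_le_and_eq_iff c).2

variable {κ : Type*} [Fintype κ] [LinearOrder κ]

noncomputable def pqracSuccessProb (B : κ → OrthonormalBasis ι 𝕜 E) : ℝ :=
  𝔼 p ∈ {p : κ × κ | p.1 < p.2}, pairSuccessProb (B p.1) (B p.2)

variable [Nontrivial κ]

theorem nonempty_filter_fst_lt_snd : ({p : κ × κ | p.1 < p.2} : Finset (κ × κ)).Nonempty :=
  let ⟨a, b, hab⟩ := exists_pair_lt κ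
  ⟨(a, b), by simpa using hab⟩

variable [Nonempty ι]

theorem pqracSuccessProb_le (B : κ → OrthonormalBasis ι 𝕜 E) :
    pqracSuccessProb B ≤ 1 / 2 * (1 + 1 / √(Fintype.card ι)) :=
  expect_le nonempty_filter_fst_lt_snd fun _ _ => pairSuccessProb_le _ _

theorem pqracSuccessProb_eq_iff (B : κ → OrthonormalBasis ι 𝕜 E) :
    pqracSuccessProb B = 1 / 2 * (1 + 1 / √(Fintype.card ι)) ↔
      Pairwise fun a b => IsMutuallyUnbiased (B a) (B b) := by
  rw [pqracSuccessProb, expect_eq_iff_of_le nonempty_filter_fst_lt_snd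
    fun _ _ => pairSuccessProb_le _ _]
  simp only [pairSuccessProb_eq_iff, mem_filter, mem_univ, true_and, Prod.forall]
  refine ⟨fun h a b hab => ?_, fun h a b hab => h hab.ne⟩
  rcases hab.lt_or_gt with hlt | hgt
  · exact h a b hlt
  · exact (h b a hgt).symm

end MutuallyUnbiased

open scoped ComplexInnerProductSpace in
theorem pqrac_bound_and_mub_iff (n d : ℕ) (hn : 2 ≤ n) (hd : 2 ≤ d)
    (P : (Fin n → OrthonormalBasis (Fin d) ℂ (EuclideanSpace ℂ (Fin d))) → ℝ)
    (hP : ∀ B, P B = (1 / (n.choose 2 : ℝ)) *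
      ∑ p ∈ Finset.univ.filter (fun p : Fin n × Fin n => p.1 < p.2),
        (1 / (2 * d ^ 2 : ℝ)) * ∑ i : Fin d, ∑ j : Fin d, (1 + ‖⟪B p.1 i, B p.2 j⟫‖)) :
    (∀ B, P B ≤ (1 / 2) * (1 + 1 / Real.sqrt d)) ∧
    ((∃ B, P B = (1 / 2) * (1 + 1 / Real.sqrt d)) ↔
      ∃ B : Fin n → OrthonormalBasis (Fin d) ℂ (EuclideanSpace ℂ (Fin d)),
        ∀ a b : Fin n, a ≠ b → ∀ i j : Fin d, ‖⟪B a i, B b j⟫‖ ^ 2 = 1 / d) := by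
  have : Nonempty (Fin d) := ⟨⟨0, by omega⟩⟩
  have : Nontrivial (Fin n) := Fin.nontrivial_iff_two_le.mpr hn
  have hPB : ∀ B, P B = pqracSuccessProb B := fun B => by
    rw [hP B, pqracSuccessProb, expect_eq_sum_div_card, Fintype.card_product_filter_lt,
      one_div_mul_eq_div]
    simp only [pairSuccessProb, Fintype.card_fin]
  have hmub := pqracSuccessProb_eq_iff (ι := Fin d) (κ := Fin n) (𝕜 := ℂ)
    (E := EuclideanSpace ℂ (Fin d))
  simp only [Pairwise, IsMutuallyUnbiased, Fintype.card_fin] at hmub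
  refine ⟨fun B => ?_, exists_congr fun B => ?_⟩
  · simpa [hPB] using pqracSuccessProb_le (ι := Fin d) B
  · rw [hPB, hmub]
end

section
/- Let {ψ_i}, {φ_j} be orthonormal bases of ℂ^d with d ≥ 2, and suppose the average success probability (1/(2d²)) ∑_{i,j} (1 + |⟨ψ_i, φ_j⟩|) equals (1/2)(1 + 1/√d). Then for every pair (i,j), the largest eigenvalue of |ψ_i⟩⟨ψ_i| + |φ_j⟩⟨φ_j| equals 1 + 1/√d. -/
/-!
By Parseval each row `j ↦ |⟨ψ_i, φ_j⟩|` has unit ℓ²-norm, so by Cauchy–Schwarz its sum is at most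
`√d`. The hypothesis says the total over all rows is `d √d`, so every row is a Cauchy–Schwarz
equality case and `|⟨ψ_i, φ_j⟩| = 1/√d` throughout. On the span of two unit vectors `u, w` with
`g = ⟨u, w⟩`, the matrix `|u⟩⟨u| + |w⟩⟨w|` acts by `[[1, g], [ḡ, 1]]`, whose eigenvalues are
`1 ± |g|`; off that span it vanishes.
-/

open Matrix Finset

section RankOneProjections

variable {𝕜 n : Type*} [RCLike 𝕜] [Fintype n]

lemma vecMulVec_star_mulVec (u v : n → 𝕜) :
    vecMulVec u (star u) *ᵥ v = (star u ⬝ᵥ v) • u := by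
  rw [vecMulVec_mulVec, op_smul_eq_smul]

variable {u w : n → 𝕜}

lemma eq_zero_or_sub_one_sq_eq_norm_sq_of_mulVec_eq_smul (hu : star u ⬝ᵥ u = 1)
    (hw : star w ⬝ᵥ w = 1) {μ : 𝕜} {v : n → 𝕜} (hv : v ≠ 0)
    (h : (vecMulVec u (star u) + vecMulVec w (star w)) *ᵥ v = μ • v) :
    μ = 0 ∨ (μ - 1) ^ 2 = (‖star u ⬝ᵥ w‖ : 𝕜) ^ 2 := by
  rw [add_mulVec, vecMulVec_star_mulVec, vecMulVec_star_mulVec] at h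
  set g := star u ⬝ᵥ w
  set a := star u ⬝ᵥ v
  set b := star w ⬝ᵥ v
  have ha : (μ - 1) * a = b * g := by
    have := congrArg (star u ⬝ᵥ ·) h
    simp only [dotProduct_add, dotProduct_smul, smul_eq_mul, hu] at this
    linear_combination -this
  have hb : (μ - 1) * b = a * star g := by
    have := congrArg (star w ⬝ᵥ ·) h
    simp only [dotProduct_add, dotProduct_smul, smul_eq_mul, hw, star_dotProduct w u] at this
    linear_combination -this
  have hg : g * star g = (‖g‖ : 𝕜) ^ 2 := RCLike.mul_conj g
  by_cases hab : a = 0 ∧ b = 0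
  · left
    rw [hab.1, hab.2, zero_smul, zero_smul, add_zero] at h
    exact (smul_eq_zero.mp h.symm).resolve_right hv
  · right
    rcases not_and_or.mp hab with ha0 | hb0
    · refine mul_right_cancel₀ ha0 ?_
      linear_combination (μ - 1) * ha + g * hb + a * hg
    · refine mul_right_cancel₀ hb0 ?_
      linear_combination (μ - 1) * hb + star g * ha + b * hg

lemma exists_ne_zero_mulVec_eq_one_add_norm_smul (hu : star u ⬝ᵥ u = 1) (hw : star w ⬝ᵥ w = 1) :
    ∃ v : n → 𝕜, v ≠ 0 ∧ (vecMulVec u (star u) + vecMulVec w (star w)) *ᵥ v =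
      ((1 + ‖star u ⬝ᵥ w‖ : ℝ) : 𝕜) • v := by
  simp only [add_mulVec, vecMulVec_star_mulVec]
  set g := star u ⬝ᵥ w
  have hwu : star w ⬝ᵥ u = star g := star_dotProduct w u
  rcases (norm_nonneg g).eq_or_lt with h0 | hpos
  · have hg : g = 0 := norm_eq_zero.mp h0.symm
    refine ⟨u, fun h => by simp [h] at hu, ?_⟩
    simp [hu, hwu, hg]
  -- `g • u + ‖g‖ • w` is the `(1 + ‖g‖)`-eigenvector; it vanishes when `g = 0`, where `u` is one.
  · refine ⟨g • u + (‖g‖ : 𝕜) • w, fun h => ?_, ?_⟩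
    · have := congrArg (star w ⬝ᵥ ·) h
      simp only [dotProduct_add, dotProduct_smul, smul_eq_mul, hw, hwu, dotProduct_zero, mul_one,
        RCLike.star_def, RCLike.mul_conj] at this
      have : ‖g‖ ^ 2 + ‖g‖ = 0 := by exact_mod_cast this
      nlinarith
    · simp only [dotProduct_add, dotProduct_smul, smul_eq_mul, hu, hw, hwu, RCLike.star_def,
        RCLike.mul_conj, smul_add, smul_smul]
      congr 2 <;> push_cast <;> ring

theorem isGreatest_eigenvalues_add_vecMulVec_star (hu : star u ⬝ᵥ u = 1)
    (hw : star w ⬝ᵥ w = 1) :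
    IsGreatest {μ : ℝ | ∃ v : n → 𝕜, v ≠ 0 ∧
      (vecMulVec u (star u) + vecMulVec w (star w)) *ᵥ v = (μ : 𝕜) • v}
      (1 + ‖star u ⬝ᵥ w‖) := by
  refine ⟨exists_ne_zero_mulVec_eq_one_add_norm_smul hu hw, ?_⟩
  rintro μ ⟨v, hv, h⟩
  rcases eq_zero_or_sub_one_sq_eq_norm_sq_of_mulVec_eq_smul hu hw hv h with h0 | h1
  · rw [RCLike.ofReal_eq_zero.mp h0]
    positivity
  · have : (μ - 1) ^ 2 = ‖star u ⬝ᵥ w‖ ^ 2 := by exact_mod_cast h1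
    nlinarith [norm_nonneg (star u ⬝ᵥ w)]

end RankOneProjections

section CauchySchwarzEquality

variable {ι κ : Type*} [Fintype ι] [Fintype κ]

lemma sum_le_sqrt_card_of_sum_sq_eq_one_s19 {x : κ → ℝ} (h : ∑ j, x j ^ 2 = 1) :
    ∑ j, x j ≤ √(Fintype.card κ) := by
  refine (le_abs_self _).trans (Real.abs_le_sqrt ?_)
  simpa [h] using sq_sum_le_card_mul_sum_sq (s := univ) (f := x)

lemma eq_one_div_sqrt_card_of_sum_eq_sqrt_card {x : κ → ℝ} (h2 : ∑ j, x j ^ 2 = 1)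
    (h1 : ∑ j, x j = √(Fintype.card κ)) (j : κ) : x j = 1 / √(Fintype.card κ) := by
  have hn : (0 : ℝ) < Fintype.card κ := by
    exact_mod_cast Fintype.card_pos_iff.mpr ⟨j⟩
  have hs : √(Fintype.card κ) ≠ 0 := (Real.sqrt_pos.mpr hn).ne'
  have hzero : ∑ k, (x k - 1 / √(Fintype.card κ)) ^ 2 = 0 := by
    simp only [sub_sq, sum_add_distrib, sum_sub_distrib, ← sum_mul, ← mul_sum, h1, h2,
      sum_const, card_univ, nsmul_eq_mul, div_pow, Real.sq_sqrt hn.le]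
    field_simp
    ring
  have := (Fintype.sum_eq_zero_iff_of_nonneg fun k => sq_nonneg _).mp hzero
  exact sub_eq_zero.mp (pow_eq_zero_iff two_ne_zero |>.mp (congrFun this j))

lemma eq_one_div_sqrt_card_of_sum_sum_eq {x : ι → κ → ℝ} (h2 : ∀ i, ∑ j, x i j ^ 2 = 1)
    (h1 : ∑ i, ∑ j, x i j = Fintype.card ι * √(Fintype.card κ)) (i : ι) (j : κ) :
    x i j = 1 / √(Fintype.card κ) := by
  have hrow : ∀ i, ∑ j, x i j = √(Fintype.card κ) := by
    refine fun i => (sum_eq_sum_iff_of_le fun i _ => sum_le_sqrt_card_of_sum_sq_eq_one_s19 (h2 i)).mp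
      ?_ i (mem_univ i)
    simpa using h1
  exact eq_one_div_sqrt_card_of_sum_eq_sqrt_card (h2 i) (hrow i) j

end CauchySchwarzEquality

lemma EuclideanSpace.star_ofLp_dotProduct_ofLp {𝕜 ι : Type*} [RCLike 𝕜] [Fintype ι]
    (x y : EuclideanSpace 𝕜 ι) : star (WithLp.ofLp x) ⬝ᵥ WithLp.ofLp y = inner 𝕜 x y := by
  rw [EuclideanSpace.inner_eq_star_dotProduct, dotProduct_comm]

open scoped ComplexInnerProductSpace in
theorem equality_forces_lambda_max_general (d : ℕ)
    (ψ φ : OrthonormalBasis (Fin d) ℂ (EuclideanSpace ℂ (Fin d)))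
    (heq : (1 / (2 * d ^ 2 : ℝ)) * (∑ i : Fin d, ∑ j : Fin d, (1 + ‖⟪ψ i, φ j⟫‖)) =
      (1 / 2) * (1 + 1 / Real.sqrt d)) :
    ∀ i j : Fin d,
      IsGreatest {μ : ℝ | ∃ v : Fin d → ℂ, v ≠ 0 ∧
          (Matrix.vecMulVec (fun k => ψ i k) (star fun k => ψ i k) +
            Matrix.vecMulVec (fun k => φ j k) (star fun k => φ j k)).mulVec v = (μ : ℂ) • v}
        (1 + 1 / Real.sqrt d) := by
  intro i j
  have hd : (0 : ℝ) < d := by exact_mod_cast i.pos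
  have htotal : ∑ i, ∑ j, ‖⟪ψ i, φ j⟫‖ = d * √d := by
    simp only [sum_add_distrib, sum_const, card_univ, Fintype.card_fin, nsmul_eq_mul,
      mul_one] at heq
    field_simp at heq
    refine mul_right_cancel₀ (Real.sqrt_pos.mpr hd).ne' ?_
    linear_combination heq - d * Real.mul_self_sqrt hd.le
  have hentry : ‖⟪ψ i, φ j⟫‖ = 1 / √d := by
    simpa using eq_one_div_sqrt_card_of_sum_sum_eq (x := fun i j => ‖⟪ψ i, φ j⟫‖)
      (fun i => by rw [φ.sum_sq_norm_inner_left, ψ.orthonormal.1 i, one_pow])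
      (by simpa using htotal) i j
  have := isGreatest_eigenvalues_add_vecMulVec_star (u := WithLp.ofLp (ψ i))
    (w := WithLp.ofLp (φ j)) (by rw [EuclideanSpace.star_ofLp_dotProduct_ofLp, ψ.inner_eq_one])
    (by rw [EuclideanSpace.star_ofLp_dotProduct_ofLp, φ.inner_eq_one])
  rwa [EuclideanSpace.star_ofLp_dotProduct_ofLp, hentry] at this

open scoped ComplexInnerProductSpace in
theorem equality_forces_lambda_max (d : ℕ) (hd : 2 ≤ d)
    (ψ φ : OrthonormalBasis (Fin d) ℂ (EuclideanSpace ℂ (Fin d)))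
    (heq : (1 / (2 * d ^ 2 : ℝ)) * (∑ i : Fin d, ∑ j : Fin d, (1 + ‖⟪ψ i, φ j⟫‖)) =
      (1 / 2) * (1 + 1 / Real.sqrt d)) :
    ∀ i j : Fin d,
      IsGreatest {μ : ℝ | ∃ v : Fin d → ℂ, v ≠ 0 ∧
          (Matrix.vecMulVec (fun k => ψ i k) (star fun k => ψ i k) +
            Matrix.vecMulVec (fun k => φ j k) (star fun k => φ j k)).mulVec v = (μ : ℂ) • v}
        (1 + 1 / Real.sqrt d) :=
  equality_forces_lambda_max_general d ψ φ heq
end
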